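/- arXiv:1802.07178 — 2 statements merged into one kernel-verified Lean document; each statement's English description precedes it below -/
import Mathlib

section
/- Let m be a deficient natural number and p a prime such that p^α exactly divides m for some α ≥ 1. Then: (1) if p·σ(p^α) < c(m) (as rationals) then m·p is abundant; (2) if p·σ(p^α) = c(m) then m·p is perfect; (3) if p·σ(p^α) > c(m) then m·p is deficient. -/
/-- The sum of all divisors of `n`. -/
def sigma1 (n : ℕ) : ℕ := ∑ d ∈ n.divisors, d

/-- The center of a deficient number `m`: `c(m) = σ(m)/d(m)` where `d(m) = 2m - σ(m)`. -/
def center (n : ℕ) : ℚ := (sigma1 n : ℚ) / (2 * (n : ℚ) - (sigma1 n : ℚ))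

lemma sigma1_mul {a b : ℕ} (h : a.Coprime b) : sigma1 (a * b) = sigma1 a * sigma1 b := by
  have := (ArithmeticFunction.isMultiplicative_sigma (k := 1)).map_mul_of_coprime h
  simpa [sigma1, ArithmeticFunction.sigma_one_apply] using this

lemma sigma1_prime_pow {p : ℕ} (hp : p.Prime) (n : ℕ) :
    sigma1 (p ^ n) = ∑ i ∈ Finset.range (n + 1), p ^ i := by
  unfold sigma1
  rw [Nat.sum_divisors_prime_pow hp]

/-- If `m` is deficient and `p^α` exactly divides `m` (`α ≥ 1`), then comparing
`p·σ(p^α)` with `c(m)` decides whether `m·p` is abundant, perfect or deficient. -/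
theorem stmt10 (m p α : ℕ) (hm : 1 ≤ m) (hdef : sigma1 m < 2 * m)
    (hp : p.Prime) (hα : 1 ≤ α) (hdvd : p ^ α ∣ m) (hndvd : ¬ p ^ (α + 1) ∣ m) :
    (((p : ℚ) * (sigma1 (p ^ α) : ℚ) < center m → 2 * (m * p) < sigma1 (m * p)) ∧
     ((p : ℚ) * (sigma1 (p ^ α) : ℚ) = center m → sigma1 (m * p) = 2 * (m * p)) ∧
     ((p : ℚ) * (sigma1 (p ^ α) : ℚ) > center m → sigma1 (m * p) < 2 * (m * p))) := by
  obtain ⟨k, hk⟩ := hdvd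
  have hpk : ¬ p ∣ k := by
    intro h
    obtain ⟨t, ht⟩ := h
    exact hndvd ⟨t, by rw [hk, ht]; ring⟩
  have hcop : Nat.Coprime p k := (Nat.Prime.coprime_iff_not_dvd hp).mpr hpk
  have hcop1 : Nat.Coprime (p ^ α) k := Nat.Coprime.pow_left _ hcop
  have hcop2 : Nat.Coprime (p ^ (α + 1)) k := Nat.Coprime.pow_left _ hcop
  have h1 : sigma1 m = sigma1 (p ^ α) * sigma1 k := by rw [hk, sigma1_mul hcop1]
  have h2 : sigma1 (m * p) = sigma1 (p ^ (α + 1)) * sigma1 k := by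
    rw [show m * p = p ^ (α + 1) * k by rw [hk]; ring, sigma1_mul hcop2]
  have h3 : sigma1 (p ^ (α + 1)) = p * sigma1 (p ^ α) + 1 := by
    rw [sigma1_prime_pow hp, sigma1_prime_pow hp, Finset.sum_range_succ', Finset.mul_sum]
    simp [pow_succ, mul_comm]
  have key : sigma1 (m * p) * sigma1 (p ^ α) = sigma1 m * (p * sigma1 (p ^ α) + 1) := by
    rw [h1, h2, h3]; ring
  have hσα : 0 < sigma1 (p ^ α) := by
    unfold sigma1
    apply Finset.sum_pos
    · intro i hi; exact Nat.pos_of_mem_divisors hi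
    · exact ⟨1, Nat.one_mem_divisors.mpr (pow_ne_zero _ hp.pos.ne')⟩
  have hQσα : (0 : ℚ) < (sigma1 (p ^ α) : ℚ) := by exact_mod_cast hσα
  have hd : (0 : ℚ) < 2 * (m : ℚ) - (sigma1 m : ℚ) := by
    have : (sigma1 m : ℚ) < 2 * (m : ℚ) := by exact_mod_cast hdef
    linarith
  have keyQ : (sigma1 (m * p) : ℚ) * (sigma1 (p ^ α) : ℚ)
      = (sigma1 m : ℚ) * ((p : ℚ) * (sigma1 (p ^ α) : ℚ) + 1) := by exact_mod_cast key
  unfold center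
  refine ⟨?_, ?_, ?_⟩
  · intro h
    rw [lt_div_iff₀ hd] at h
    have : ((2 * (m * p) : ℕ) : ℚ) < ((sigma1 (m * p) : ℕ) : ℚ) := by
      push_cast
      nlinarith [hQσα, keyQ]
    exact_mod_cast this
  · intro h
    rw [eq_div_iff hd.ne'] at h
    have : ((sigma1 (m * p) : ℕ) : ℚ) = ((2 * (m * p) : ℕ) : ℚ) := by
      push_cast
      have h4 : (sigma1 (m * p) : ℚ) * (sigma1 (p ^ α) : ℚ)
          = 2 * (m : ℚ) * (p : ℚ) * (sigma1 (p ^ α) : ℚ) := by nlinarith [keyQ]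
      have := mul_right_cancel₀ hQσα.ne' h4
      linarith
    exact_mod_cast this
  · intro h
    rw [gt_iff_lt, div_lt_iff₀ hd] at h
    have : ((sigma1 (m * p) : ℕ) : ℚ) < ((2 * (m * p) : ℕ) : ℚ) := by
      push_cast
      nlinarith [hQσα, keyQ]
    exact_mod_cast this
end

section
/- Let m be a deficient natural number and p a prime such that p^α exactly divides m for some α ≥ 1. Then m·p is primitive abundant if and only if (as inequalities of rationals): p·σ(p^α) < c(m), and p·σ(p^α) > σ(m) / (d(m) + 2m/(σ(q^β) − 1)) for every prime power q^β exactly dividing m with q ≠ p (β ≥ 1). -/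
/-- `n` is abundant if `σ(n) > 2n`. -/
def Abundant (n : ℕ) : Prop := 2 * n < sigma1 n

/-- `n` is deficient if `σ(n) < 2n`. -/
def Deficient (n : ℕ) : Prop := sigma1 n < 2 * n

/-- A primitive abundant number: abundant and all proper divisors deficient. -/
def PrimitiveAbundant (n : ℕ) : Prop :=
  Abundant n ∧ ∀ d ∈ n.properDivisors, Deficient d

lemma sigma1_prime_pow_succ {p : ℕ} (hp : p.Prime) (k : ℕ) :
    sigma1 (p ^ (k + 1)) = p * sigma1 (p ^ k) + 1 := by
  simp only [sigma1, ← ArithmeticFunction.sigma_one_apply,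
    ArithmeticFunction.sigma_one_apply_prime_pow hp, geom_sum_succ]

lemma sigma1_pos {n : ℕ} (hn : n ≠ 0) : 0 < sigma1 n :=
  Finset.sum_pos (fun _ hd => Nat.pos_of_mem_divisors hd) (Nat.nonempty_divisors.2 hn)

lemma sigma1_pow_factorization_mul_sigma1_mul_prime {n r : ℕ} (hr : r.Prime) (hn : n ≠ 0) :
    sigma1 (r ^ n.factorization r) * sigma1 (n * r) =
      (r * sigma1 (r ^ n.factorization r) + 1) * sigma1 n := by
  set γ := n.factorization r
  set u := n / r ^ γ
  have hu : r.Coprime u := Nat.coprime_ordCompl hr hn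
  have hn_eq : n = r ^ γ * u := (Nat.ordProj_mul_ordCompl_eq_self n r).symm
  have hnr_eq : n * r = r ^ (γ + 1) * u := by rw [hn_eq, pow_succ]; ring
  rw [hnr_eq, sigma1_mul (hu.pow_left _), sigma1_prime_pow_succ hr, hn_eq,
    sigma1_mul (hu.pow_left _)]
  ring

lemma Deficient.ne_zero {n : ℕ} (h : Deficient n) : n ≠ 0 := by
  rintro rfl
  simp [Deficient, sigma1] at h

lemma deficient_iff_abundancyIndex_lt_two {n : ℕ} (hn : n ≠ 0) :
    Deficient n ↔ n.abundancyIndex < 2 := by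
  rw [Deficient, Nat.abundancyIndex, div_lt_iff₀ (by positivity), sigma1]
  norm_cast

lemma Deficient.of_dvd {d n : ℕ} (h : Deficient n) (hd : d ∣ n) : Deficient d := by
  have hd0 : d ≠ 0 := ne_zero_of_dvd_ne_zero h.ne_zero hd
  rw [deficient_iff_abundancyIndex_lt_two hd0]
  exact (Nat.abundancyIndex_le_of_dvd h.ne_zero hd).trans_lt
    ((deficient_iff_abundancyIndex_lt_two h.ne_zero).1 h)

lemma primitiveAbundant_iff_forall_prime_deficient_div {n : ℕ} (hn : n ≠ 0) :
    PrimitiveAbundant n ↔ Abundant n ∧ ∀ r, r.Prime → r ∣ n → Deficient (n / r) := by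
  refine and_congr_right fun _ => ⟨fun h r hr hrn => h _ ?_, fun h d hd => ?_⟩
  · exact Nat.mem_properDivisors.2 ⟨Nat.div_dvd_of_dvd hrn,
      Nat.div_lt_self (Nat.pos_of_ne_zero hn) hr.one_lt⟩
  · obtain ⟨⟨e, rfl⟩, hlt⟩ := Nat.mem_properDivisors.1 hd
    have he : e ≠ 1 := by rintro rfl; simp at hlt
    obtain ⟨r, hr, f, rfl⟩ := Nat.exists_prime_and_dvd he
    refine (h r hr (dvd_mul_of_dvd_right (dvd_mul_right r f) d)).of_dvd ⟨f, ?_⟩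
    rw [show d * (r * f) = d * f * r by ring, Nat.mul_div_cancel _ hr.pos]

lemma factorization_eq_of_dvd_of_not_dvd {n p k : ℕ} (hp : p.Prime) (hn : n ≠ 0)
    (hk : p ^ k ∣ n) (hk' : ¬ p ^ (k + 1) ∣ n) : n.factorization p = k := by
  rw [hp.pow_dvd_iff_le_factorization hn] at hk hk'
  omega

lemma abundant_mul_prime_iff {m p : ℕ} (hp : p.Prime) (hdef : Deficient m) :
    Abundant (m * p) ↔ (p : ℚ) * sigma1 (p ^ m.factorization p) < center m := by
  have hkey := sigma1_pow_factorization_mul_sigma1_mul_prime hp hdef.ne_zero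
  set A := sigma1 (p ^ m.factorization p)
  have hA : (0 : ℚ) < A := by exact_mod_cast sigma1_pos (pow_ne_zero _ hp.ne_zero)
  have hd : (sigma1 m : ℚ) < 2 * m := by exact_mod_cast hdef
  have hkeyQ : (A : ℚ) * sigma1 (m * p) = (p * A + 1) * sigma1 m := by exact_mod_cast hkey
  rw [Abundant, center, lt_div_iff₀ (by linarith), ← Nat.cast_lt (α := ℚ),
    ← mul_lt_mul_iff_of_pos_left hA, hkeyQ]
  push_cast
  constructor <;> intro h <;> linarith

lemma sigma1_eq_of_mul_prime_eq_mul_prime {m n p q β : ℕ} (hp : p.Prime) (hq : q.Prime)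
    (hqp : q ≠ p) (hm0 : m ≠ 0) (hβ : m.factorization q = β + 1) (hn : n * q = m * p) :
    sigma1 (p ^ m.factorization p) * (q * sigma1 (q ^ β) + 1) * sigma1 n =
      sigma1 (q ^ β) * (p * sigma1 (p ^ m.factorization p) + 1) * sigma1 m := by
  have hn0 : n ≠ 0 := by rintro rfl; simp [hm0, hp.ne_zero] at hn
  have hnβ : n.factorization q = β := by
    have := congrArg (fun k => k.factorization q) hn
    simp only [Nat.factorization_mul hn0 hq.ne_zero, Nat.factorization_mul hm0 hp.ne_zero,
      Finsupp.add_apply, hq.factorization_self, hp.factorization, hβ] at this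
    simpa [Finsupp.single_apply, hqp.symm] using this
  have hkeyn := sigma1_pow_factorization_mul_sigma1_mul_prime hq hn0
  rw [hnβ, hn] at hkeyn
  rw [mul_assoc, ← hkeyn, mul_left_comm,
    sigma1_pow_factorization_mul_sigma1_mul_prime hp hm0, mul_assoc]

lemma deficient_iff_of_mul_prime_eq {m n p q β : ℕ} (hp : p.Prime) (hq : q.Prime) (hqp : q ≠ p)
    (hdef : Deficient m) (hβ : m.factorization q = β + 1) (hn : n * q = m * p) :
    Deficient n ↔
      (sigma1 m : ℚ) / ((2 * m - sigma1 m) + 2 * m / (sigma1 (q ^ (β + 1)) - 1))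
        < p * sigma1 (p ^ m.factorization p) := by
  have hkey := sigma1_eq_of_mul_prime_eq_mul_prime hp hq hqp hdef.ne_zero hβ hn
  rw [sigma1_prime_pow_succ hq]
  set A := sigma1 (p ^ m.factorization p)
  set b := sigma1 (q ^ β)
  have hA : (0 : ℚ) < A := by exact_mod_cast sigma1_pos (pow_ne_zero _ hp.ne_zero)
  have hb : (0 : ℚ) < b := by exact_mod_cast sigma1_pos (pow_ne_zero _ hq.ne_zero)
  have hq0 : (0 : ℚ) < q := by exact_mod_cast hq.pos
  have hd : (sigma1 m : ℚ) < 2 * m := by exact_mod_cast hdef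
  have hnQ : (n : ℚ) * q = m * p := by exact_mod_cast hn
  have hkeyQ : (A : ℚ) * (q * b + 1) * sigma1 n = b * (p * A + 1) * sigma1 m := by
    exact_mod_cast hkey
  have hqb : (0 : ℚ) < q * b := by positivity
  rw [Deficient, ← Nat.cast_lt (α := ℚ), ← mul_lt_mul_iff_of_pos_left
    (show (0 : ℚ) < A * (q * b + 1) * q by positivity)]
  push_cast
  rw [show (q * b + 1 - 1 : ℚ) = q * b by ring, div_lt_iff₀ (by positivity),
    show ((2 * m - sigma1 m) + 2 * m / (q * b) : ℚ) =
        (2 * m * (q * b + 1) - sigma1 m * (q * b)) / (q * b) by field_simp; ring,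
    mul_div_assoc', lt_div_iff₀ hqb,
    show (A * (q * b + 1) * q * sigma1 n : ℚ) = q * b * (p * A + 1) * sigma1 m by
      linear_combination q * hkeyQ,
    show (A * (q * b + 1) * q * (2 * n) : ℚ) = 2 * m * p * A * (q * b + 1) by
      linear_combination 2 * A * (q * b + 1) * hnQ]
  constructor <;> intro h <;> linarith

theorem stmt11_general (m p α : ℕ) (hdef : Deficient m)
    (hp : p.Prime) (hdvd : p ^ α ∣ m) (hndvd : ¬ p ^ (α + 1) ∣ m) :
    PrimitiveAbundant (m * p) ↔
      ((p : ℚ) * (sigma1 (p ^ α) : ℚ) < center m ∧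
       ∀ q β : ℕ, q.Prime → q ≠ p → 1 ≤ β → q ^ β ∣ m → ¬ q ^ (β + 1) ∣ m →
         (sigma1 m : ℚ) /
             ((2 * (m : ℚ) - (sigma1 m : ℚ)) + 2 * (m : ℚ) / ((sigma1 (q ^ β) : ℚ) - 1))
           < (p : ℚ) * (sigma1 (p ^ α) : ℚ)) := by
  have hm0 := hdef.ne_zero
  obtain rfl := factorization_eq_of_dvd_of_not_dvd hp hm0 hdvd hndvd
  rw [primitiveAbundant_iff_forall_prime_deficient_div (mul_ne_zero hm0 hp.ne_zero),
    abundant_mul_prime_iff hp hdef]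
  refine and_congr_right fun _ => ⟨fun h q β hq hqp hβ hqdvd hqndvd => ?_, fun h r hr hrmp => ?_⟩
  · obtain ⟨β, rfl⟩ := Nat.exists_eq_add_of_le' hβ
    have hqm : q ∣ m := (dvd_pow_self q (by omega)).trans hqdvd
    exact (deficient_iff_of_mul_prime_eq hp hq hqp hdef
      (factorization_eq_of_dvd_of_not_dvd hq hm0 hqdvd hqndvd)
      (Nat.div_mul_cancel (dvd_mul_of_dvd_left hqm p))).1 (h q hq (dvd_mul_of_dvd_left hqm p))
  · rcases eq_or_ne r p with rfl | hrp
    · rwa [Nat.mul_div_cancel _ hr.pos]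
    have hrm : r ∣ m := (hr.dvd_mul.1 hrmp).resolve_right fun hrp' =>
      hrp ((Nat.prime_dvd_prime_iff_eq hr hp).1 hrp')
    obtain ⟨β, hβ⟩ := Nat.exists_eq_add_of_le' (hr.factorization_pos_of_dvd hm0 hrm)
    refine (deficient_iff_of_mul_prime_eq hp hr hrp hdef hβ
      (Nat.div_mul_cancel hrmp)).2 ?_
    rw [← hβ]
    exact h r _ hr hrp (by omega) (Nat.ordProj_dvd m r) (Nat.pow_succ_factorization_not_dvd hm0 hr)

/-- If `m` is deficient and `p^α ∣∣ m` with `α ≥ 1`, then `m·p` is primitive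
abundant iff `p·σ(p^α) < c(m)` and `p·σ(p^α) > σ(m)/(d(m) + 2m/(σ(q^β) − 1))`
for each `q^β ∣∣ m` with `q ≠ p`. -/
theorem stmt11 (m p α : ℕ) (hm : 1 ≤ m) (hdef : Deficient m)
    (hp : p.Prime) (hα : 1 ≤ α) (hdvd : p ^ α ∣ m) (hndvd : ¬ p ^ (α + 1) ∣ m) :
    PrimitiveAbundant (m * p) ↔
      ((p : ℚ) * (sigma1 (p ^ α) : ℚ) < center m ∧
       ∀ q β : ℕ, q.Prime → q ≠ p → 1 ≤ β → q ^ β ∣ m → ¬ q ^ (β + 1) ∣ m →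
         (sigma1 m : ℚ) /
             ((2 * (m : ℚ) - (sigma1 m : ℚ)) + 2 * (m : ℚ) / ((sigma1 (q ^ β) : ℚ) - 1))
           < (p : ℚ) * (sigma1 (p ^ α) : ℚ)) :=
  stmt11_general m p α hdef hp hdvd hndvd
end
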